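/- Let r be a natural number. If U belongs to H(r+1), i.e., U is implementable by a circuit with exactly r+1 CS-type gates, then there exist U' ∈ H(r), indices i < j in Fin n, and e ∈ {−1, 1} such that U = CS_{i,j}^e · U'. -/

import Mathlib

open Matrix

noncomputable section

/-- ω = exp(2πi/m). -/
def omega (m : ℕ) : ℂ := Complex.exp (2 * Real.pi * Complex.I / m)

/-- X_i : the permutation matrix of the map x ↦ Function.update x i (x i + 1). -/
def Xn (n : ℕ) (i : Fin n) : Matrix (Fin n → ZMod 2) (Fin n → ZMod 2) ℂ :=
  Matrix.of fun x y => if x = Function.update y i (y i + 1) then 1 else 0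

/-- T_i : the diagonal matrix whose (x,x) entry is ω^((x i).val). -/
def Tn (m n : ℕ) (i : Fin n) : Matrix (Fin n → ZMod 2) (Fin n → ZMod 2) ℂ :=
  Matrix.diagonal fun x => omega m ^ (x i).val

/-- CS_{i,j} : the diagonal matrix whose (x,x) entry is ω^(2·(x i).val·(x j).val). -/
def CSn (m n : ℕ) (i j : Fin n) : Matrix (Fin n → ZMod 2) (Fin n → ZMod 2) ℂ :=
  Matrix.diagonal fun x => omega m ^ (2 * (x i).val * (x j).val)

/-- CS_{i,j}⁻¹ : the diagonal matrix whose (x,x) entry is ω^(-2·(x i).val·(x j).val). -/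
def CSninv (m n : ℕ) (i j : Fin n) : Matrix (Fin n → ZMod 2) (Fin n → ZMod 2) ℂ :=
  Matrix.diagonal fun x => (omega m)⁻¹ ^ (2 * (x i).val * (x j).val)

/-- A gate of a CS-type circuit: some X_i, some power of some T_i, some CS_{i,j},
or some CS_{i,j}⁻¹ (with i ≠ j). -/
inductive GateCS (n : ℕ) where
  | X (i : Fin n)
  | Tpow (i : Fin n) (l : ℕ)
  | CS (i j : Fin n) (h : i ≠ j)
  | CSinv (i j : Fin n) (h : i ≠ j)

/-- The matrix of a gate. -/
def GateCS.toMatrix (m : ℕ) {n : ℕ} : GateCS n → Matrix (Fin n → ZMod 2) (Fin n → ZMod 2) ℂ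
  | .X i => Xn n i
  | .Tpow i l => Tn m n i ^ l
  | .CS i j _ => CSn m n i j
  | .CSinv i j _ => CSninv m n i j

/-- Whether a gate is a CS or CS⁻¹ gate. -/
def GateCS.isCS {n : ℕ} : GateCS n → Bool
  | .CS _ _ _ => true
  | .CSinv _ _ _ => true
  | _ => false

/-- H(r) : the set of matrices implementable by a circuit with exactly r CS-type gates. -/
def Hset (m n r : ℕ) : Set (Matrix (Fin n → ZMod 2) (Fin n → ZMod 2) ℂ) :=
  {U | ∃ L : List (GateCS n), (L.map (GateCS.toMatrix m)).prod = U ∧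
    L.countP (fun g => g.isCS) = r}

/-- Two matrices are phase-equivalent if they differ by a nonzero scalar. -/
def PhaseEq {α : Type*} (U V : Matrix α α ℂ) : Prop := ∃ c : ℂ, c ≠ 0 ∧ U = c • V

/-!
Each non-CS gate can be pushed to the right past a CS-type gate: T-powers commute with it
(both are diagonal), an X on a third qubit commutes with it, and an X on one of its two qubits
turns CS_{a,b}^{±1} into CS_{a,b}^{∓1} at the cost of an extra power of T on the other qubit.
Pushing the first CS-type gate of a circuit to the front therefore leaves a circuit with one CS-type
gate fewer.
-/

lemma omega_ne_zero (m : ℕ) : omega m ≠ 0 := Complex.exp_ne_zero _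

-- `omega 0 = exp 0 = 1`, since `x / 0 = 0` in `ℂ`.
lemma omega_inv (m : ℕ) : (omega m)⁻¹ = omega m ^ (m - 1) := by
  rcases Nat.eq_zero_or_pos m with rfl | hm
  · simp [omega]
  · refine inv_eq_of_mul_eq_one_left ?_
    rw [← pow_succ, Nat.sub_add_cancel hm, omega, ← Complex.exp_nat_mul,
      mul_div_cancel₀ _ (Nat.cast_ne_zero.mpr hm.ne'), Complex.exp_two_pi_mul_I]

lemma ZMod.add_one_add_one (z : ZMod 2) : z + 1 + 1 = z := by
  revert z; decide

lemma ZMod.val_add_one_eq_one_sub (z : ZMod 2) : (z + 1).val = 1 - z.val := by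
  revert z; decide

lemma pow_two_mul_val_add_one_mul_val {ζ : ℂ} (hζ : ζ ≠ 0) (u v : ZMod 2) :
    ζ ^ (2 * (u + 1).val * v.val) = ζ⁻¹ ^ (2 * u.val * v.val) * ζ ^ (2 * v.val) := by
  rw [ZMod.val_add_one_eq_one_sub]
  have hu := ZMod.val_lt u
  have hv := ZMod.val_lt v
  interval_cases u.val <;> interval_cases v.val <;> simp [hζ]

section Gates

variable {m n : ℕ}

lemma CSn_comm (i j : Fin n) : CSn m n i j = CSn m n j i := by
  simp only [CSn, mul_right_comm]

lemma CSninv_comm (i j : Fin n) : CSninv m n i j = CSninv m n j i := by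
  simp only [CSninv, mul_right_comm]

lemma Xn_mul_diagonal (i : Fin n) (d : (Fin n → ZMod 2) → ℂ) :
    Xn n i * diagonal d = diagonal (fun x => d (Function.update x i (x i + 1))) * Xn n i := by
  ext x y
  simp only [mul_diagonal, diagonal_mul, Xn, of_apply]
  split_ifs with h
  · simp [h, ZMod.add_one_add_one]
  · simp

lemma Xn_mul_CSn {a b : Fin n} (hab : a ≠ b) :
    Xn n a * CSn m n a b = CSninv m n a b * (Tn m n b ^ 2 * Xn n a) := by
  rw [CSn, Xn_mul_diagonal, CSninv, Tn, diagonal_pow, ← mul_assoc, diagonal_mul_diagonal]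
  congr 2
  funext x
  rw [Function.update_self, Function.update_of_ne hab.symm,
    pow_two_mul_val_add_one_mul_val (omega_ne_zero m), Pi.pow_apply]
  ring

lemma Xn_mul_CSninv {a b : Fin n} (hab : a ≠ b) :
    Xn n a * CSninv m n a b = CSn m n a b * (Tn m n b ^ (2 * (m - 1)) * Xn n a) := by
  rw [CSninv, Xn_mul_diagonal, CSn, Tn, diagonal_pow, ← mul_assoc, diagonal_mul_diagonal]
  congr 2
  funext x
  rw [Function.update_self, Function.update_of_ne hab.symm,
    pow_two_mul_val_add_one_mul_val (inv_ne_zero (omega_ne_zero m)), inv_inv, Pi.pow_apply,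
    omega_inv]
  ring

lemma Xn_mul_CSn_of_ne {i a b : Fin n} (hia : i ≠ a) (hib : i ≠ b) :
    Xn n i * CSn m n a b = CSn m n a b * Xn n i := by
  simp only [CSn, Xn_mul_diagonal, Function.update_of_ne hia.symm, Function.update_of_ne hib.symm]

lemma Xn_mul_CSninv_of_ne {i a b : Fin n} (hia : i ≠ a) (hib : i ≠ b) :
    Xn n i * CSninv m n a b = CSninv m n a b * Xn n i := by
  simp only [CSninv, Xn_mul_diagonal, Function.update_of_ne hia.symm,
    Function.update_of_ne hib.symm]

lemma Tn_pow_mul_diagonal (i : Fin n) (l : ℕ) (d : (Fin n → ZMod 2) → ℂ) :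
    Tn m n i ^ l * diagonal d = diagonal d * Tn m n i ^ l := by
  rw [Tn, diagonal_pow]
  exact commute_diagonal _ _

lemma mul_mem_Hset {U V : Matrix (Fin n → ZMod 2) (Fin n → ZMod 2) ℂ} {r s : ℕ}
    (hU : U ∈ Hset m n r) (hV : V ∈ Hset m n s) : U * V ∈ Hset m n (r + s) := by
  obtain ⟨L, rfl, rfl⟩ := hU
  obtain ⟨M, rfl, rfl⟩ := hV
  exact ⟨L ++ M, by simp, List.countP_append ..⟩

namespace GateCS

lemma exists_toMatrix_mul_eq_mul (g c : GateCS n) (hg : g.isCS = false) (hc : c.isCS = true) :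
    ∃ c' : GateCS n, c'.isCS = true ∧
      ∃ V ∈ Hset m n 0, g.toMatrix m * c.toMatrix m = c'.toMatrix m * V := by
  match g, c with
  | .CS .., _ | .CSinv .., _ | _, .X _ | _, .Tpow .. => simp [isCS] at hg hc
  | .Tpow i l, .CS a b hab =>
    exact ⟨.CS a b hab, rfl, _, ⟨[.Tpow i l], by simp [toMatrix], rfl⟩, Tn_pow_mul_diagonal ..⟩
  | .Tpow i l, .CSinv a b hab =>
    exact ⟨.CSinv a b hab, rfl, _, ⟨[.Tpow i l], by simp [toMatrix], rfl⟩, Tn_pow_mul_diagonal ..⟩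
  | .X i, .CS a b hab =>
    by_cases hia : i = a
    · subst hia
      exact ⟨.CSinv i b hab, rfl, _, ⟨[.Tpow b 2, .X i], by simp [toMatrix], rfl⟩, Xn_mul_CSn hab⟩
    by_cases hib : i = b
    · subst hib
      refine ⟨.CSinv a i hab, rfl, Tn m n a ^ 2 * Xn n i,
        ⟨[.Tpow a 2, .X i], by simp [toMatrix], rfl⟩, ?_⟩
      simp only [toMatrix]
      rw [CSn_comm, Xn_mul_CSn hab.symm, CSninv_comm]
    exact ⟨.CS a b hab, rfl, _, ⟨[.X i], by simp [toMatrix], rfl⟩, Xn_mul_CSn_of_ne hia hib⟩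
  | .X i, .CSinv a b hab =>
    by_cases hia : i = a
    · subst hia
      exact ⟨.CS i b hab, rfl, _, ⟨[.Tpow b (2 * (m - 1)), .X i], by simp [toMatrix], rfl⟩,
        Xn_mul_CSninv hab⟩
    by_cases hib : i = b
    · subst hib
      refine ⟨.CS a i hab, rfl, Tn m n a ^ (2 * (m - 1)) * Xn n i,
        ⟨[.Tpow a (2 * (m - 1)), .X i], by simp [toMatrix], rfl⟩, ?_⟩
      simp only [toMatrix]
      rw [CSninv_comm, Xn_mul_CSninv hab.symm, CSn_comm]
    exact ⟨.CSinv a b hab, rfl, _, ⟨[.X i], by simp [toMatrix], rfl⟩, Xn_mul_CSninv_of_ne hia hib⟩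

lemma exists_isCS_mul_of_countP_eq_succ :
    ∀ (L : List (GateCS n)) {r : ℕ}, L.countP (fun g => g.isCS) = r + 1 →
      ∃ c : GateCS n, c.isCS = true ∧
        ∃ U' ∈ Hset m n r, (L.map (toMatrix m)).prod = c.toMatrix m * U'
  | [], _, h => by simp at h
  | g :: L, r, h => by
    cases hg : g.isCS
    · rw [List.countP_cons_of_neg (by simp [hg])] at h
      obtain ⟨c, hc, U', hU', hL⟩ := exists_isCS_mul_of_countP_eq_succ L h
      obtain ⟨c', hc', V, hV, hgc⟩ := exists_toMatrix_mul_eq_mul g c hg hc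
      refine ⟨c', hc', V * U', by simpa using mul_mem_Hset hV hU', ?_⟩
      rw [List.map_cons, List.prod_cons, hL, ← mul_assoc, hgc, mul_assoc]
    · rw [List.countP_cons_of_pos (by simp [hg])] at h
      exact ⟨g, hg, _, ⟨L, rfl, by omega⟩, by simp⟩

lemma exists_lt_of_isCS (c : GateCS n) (hc : c.isCS = true) :
    ∃ i j : Fin n, i < j ∧ (c.toMatrix m = CSn m n i j ∨ c.toMatrix m = CSninv m n i j) := by
  match c with
  | .X _ | .Tpow .. => simp [isCS] at hc
  | .CS a b hab =>
    rcases hab.lt_or_gt with h | h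
    · exact ⟨a, b, h, .inl rfl⟩
    · exact ⟨b, a, h, .inl (CSn_comm a b)⟩
  | .CSinv a b hab =>
    rcases hab.lt_or_gt with h | h
    · exact ⟨a, b, h, .inr rfl⟩
    · exact ⟨b, a, h, .inr (CSninv_comm a b)⟩

end GateCS

end Gates

theorem H_succ_decomposition_general (m n : ℕ) (r : ℕ)
    (U : Matrix (Fin n → ZMod 2) (Fin n → ZMod 2) ℂ) (hU : U ∈ Hset m n (r + 1)) :
    ∃ U' ∈ Hset m n r, ∃ i j : Fin n, i < j ∧
      (U = CSn m n i j * U' ∨ U = CSninv m n i j * U') := by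
  obtain ⟨L, rfl, hL⟩ := hU
  obtain ⟨c, hc, U', hU', hLc⟩ := GateCS.exists_isCS_mul_of_countP_eq_succ L hL
  obtain ⟨i, j, hij, hcij | hcij⟩ := c.exists_lt_of_isCS (m := m) hc
  · exact ⟨U', hU', i, j, hij, .inl (by rw [hLc, hcij])⟩
  · exact ⟨U', hU', i, j, hij, .inr (by rw [hLc, hcij])⟩

theorem H_succ_decomposition (m n : ℕ) (hm : 0 < m) (hn : 0 < n) (r : ℕ)
    (U : Matrix (Fin n → ZMod 2) (Fin n → ZMod 2) ℂ) (hU : U ∈ Hset m n (r + 1)) :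
    ∃ U' ∈ Hset m n r, ∃ i j : Fin n, i < j ∧
      (U = CSn m n i j * U' ∨ U = CSninv m n i j * U') :=
  H_succ_decomposition_general m n r U hU

end
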